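/- arXiv:math/0612792 — 5 statements merged into one kernel-verified Lean document; each statement's English description precedes it below -/
import Mathlib

section
/- For every n ≥ 1, the number of spanning rooted forests of the path graph P_n equals F(2n), the 2n-th Fibonacci number. -/
/-- A spanning rooted forest of a graph `G`: a spanning acyclic subgraph (given by its
edge set) together with a set of roots containing exactly one root in each tree
(connected component). -/
structure RootedForest {V : Type*} (G : SimpleGraph V) where
  edges : Set (Sym2 V)
  roots : Set V
  edges_sub : edges ⊆ G.edgeSet
  acyclic : (SimpleGraph.fromEdgeSet edges).IsAcyclic
  unique_root : ∀ v : V, ∃! r, r ∈ roots ∧ (SimpleGraph.fromEdgeSet edges).Reachable v r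

/-!
Label every vertex of a rooted forest on the path by the side on which its root lies: `here`,
`left` or `right`. The forest is recovered from the labels, its edges being the steps from the
non-root vertices towards their roots, and the words that arise are exactly those that do not
start with `left`, do not end with `right`, and never have `right` immediately followed by
`left`. Dropping the condition on the last letter, the words of length `k + 1` ending in `here`,
`left`, `right` satisfy a linear recursion solved by `F(2k+1)`, `F(2k)`, `F(2k+1)`; the
admissible words are those ending in `here` or `left`, and `F(2k+1) + F(2k) = F(2k+2)`.
-/

open Finset SimpleGraph

namespace SimpleGraph

variable {n : ℕ} {H H' : SimpleGraph (Fin n)}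

theorem Reachable.adj_of_le_pathGraph (hH : H ≤ pathGraph n) {u v a b : Fin n}
    (huv : H.Reachable u v) (hab : a.val + 1 = b.val) (hua : u ≤ a) (hbv : b ≤ v) :
    H.Adj a b := by
  obtain ⟨p⟩ := huv
  induction p with
  | nil => exact absurd (hua.trans_lt (Fin.lt_def.2 (by omega))) hbv.not_gt
  | @cons u x v hux p ih =>
    by_cases hxa : x ≤ a
    · exact ih hxa hbv
    · have hstep := pathGraph_adj.1 (hH hux)
      rw [Fin.le_def] at hua hxa
      obtain rfl : a = u := Fin.ext (by omega)
      obtain rfl : b = x := Fin.ext (by omega)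
      exact hux

theorem isAcyclic_of_le_pathGraph (hH : H ≤ pathGraph n) : H.IsAcyclic := by
  refine isAcyclic_iff_forall_adj_isBridge.2 fun v w hvw => isBridge_iff.2 fun hreach => ?_
  have hle : H.deleteEdges {s(v, w)} ≤ pathGraph n := (deleteEdges_le _).trans hH
  rcases pathGraph_adj.1 (hH hvw) with h | h
  · simpa using hreach.adj_of_le_pathGraph hle h le_rfl le_rfl
  · simpa [Sym2.eq_swap] using hreach.symm.adj_of_le_pathGraph hle h le_rfl le_rfl

theorem eq_of_le_pathGraph (hH : H ≤ pathGraph n) (hH' : H' ≤ pathGraph n)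
    (h : ∀ a b : Fin n, a.val + 1 = b.val → (H.Adj a b ↔ H'.Adj a b)) : H = H' := by
  ext a b
  by_cases hab : (pathGraph n).Adj a b
  · rcases pathGraph_adj.1 hab with h' | h'
    · exact h a b h'
    · rw [H.adj_comm, H'.adj_comm]
      exact h b a h'
  · exact iff_of_false (fun h' => hab (hH h')) (fun h' => hab (hH' h'))

end SimpleGraph

namespace RootedForest

variable {V : Type*} {G : SimpleGraph V}

abbrev graph (φ : RootedForest G) : SimpleGraph V := fromEdgeSet φ.edges

theorem graph_le (φ : RootedForest G) : φ.graph ≤ G :=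
  fun _ _ h => φ.edges_sub ((fromEdgeSet_adj _).1 h).1

theorem edgeSet_graph (φ : RootedForest G) : φ.graph.edgeSet = φ.edges := by
  rw [edgeSet_fromEdgeSet, sdiff_eq_left]
  exact Set.subset_compl_iff_disjoint_right.1 (φ.edges_sub.trans G.edgeSet_subset_compl_diagSet)

theorem ext_graph {φ ψ : RootedForest G} (hg : φ.graph = ψ.graph) (hr : φ.roots = ψ.roots) :
    φ = ψ := by
  have he : φ.edges = ψ.edges := by rw [← edgeSet_graph φ, hg, edgeSet_graph]
  cases φ
  cases ψ
  congr

def ofGraph (H : SimpleGraph V) (hH : H ≤ G) (hacyc : H.IsAcyclic) (R : Set V)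
    (hR : ∀ v, ∃! r, r ∈ R ∧ H.Reachable v r) : RootedForest G where
  edges := H.edgeSet
  roots := R
  edges_sub := edgeSet_subset_edgeSet.2 hH
  acyclic := by rwa [fromEdgeSet_edgeSet]
  unique_root := by rwa [fromEdgeSet_edgeSet]

theorem graph_ofGraph {H : SimpleGraph V} {hH : H ≤ G} {hacyc : H.IsAcyclic} {R : Set V}
    {hR : ∀ v, ∃! r, r ∈ R ∧ H.Reachable v r} : (ofGraph H hH hacyc R hR).graph = H :=
  fromEdgeSet_edgeSet H

variable (φ : RootedForest G)

noncomputable def root (v : V) : V := (φ.unique_root v).exists.choose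

theorem root_mem (v : V) : φ.root v ∈ φ.roots := (φ.unique_root v).exists.choose_spec.1

theorem reachable_root (v : V) : φ.graph.Reachable v (φ.root v) :=
  (φ.unique_root v).exists.choose_spec.2

variable {φ}

theorem eq_root {v r : V} (hr : r ∈ φ.roots) (h : φ.graph.Reachable v r) : r = φ.root v :=
  (φ.unique_root v).unique ⟨hr, h⟩ ⟨φ.root_mem v, φ.reachable_root v⟩

theorem root_eq_root {v w : V} (h : φ.graph.Reachable v w) : φ.root v = φ.root w :=
  (eq_root (φ.root_mem w) (h.trans (φ.reachable_root w))).symm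

theorem root_eq_self_iff {v : V} : φ.root v = v ↔ v ∈ φ.roots :=
  ⟨fun h => h ▸ φ.root_mem v, fun h => (eq_root h Reachable.rfl).symm⟩

end RootedForest

section Chain

variable {α : Type*} (R : α → α → Prop)

def IsChainTuple {k : ℕ} (w : Fin (k + 1) → α) : Prop :=
  ∀ i : Fin k, R (w i.castSucc) (w i.succ)

instance [DecidableRel R] {k : ℕ} : DecidablePred (IsChainTuple R (k := k)) :=
  fun _ => inferInstanceAs (Decidable (∀ _, _))

variable {R}

theorem isChainTuple_snoc {k : ℕ} {w : Fin (k + 1) → α} {b : α} :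
    IsChainTuple R (Fin.snoc w b : Fin (k + 2) → α) ↔
      IsChainTuple R w ∧ R (w (Fin.last k)) b := by
  simp only [IsChainTuple, Fin.forall_fin_succ', Fin.succ_castSucc, Fin.snoc_castSucc,
    Fin.succ_last, Fin.snoc_last]

variable (R) [Fintype α] [DecidableEq α] [DecidableRel R] (P : α → Prop) [DecidablePred P]

theorem card_isChainTuple_rel_last (k : ℕ) (b : α) :
    #{w : Fin (k + 1) → α | P (w 0) ∧ IsChainTuple R w ∧ R (w (Fin.last k)) b} =
      ∑ a with R a b,
        #{w : Fin (k + 1) → α | P (w 0) ∧ IsChainTuple R w ∧ w (Fin.last k) = a} := by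
  rw [card_eq_sum_card_fiberwise (f := fun w => w (Fin.last k)) (t := {a | R a b})
    (fun w hw => by simp_all)]
  refine sum_congr rfl fun a ha => congrArg card ?_
  ext w
  simp only [mem_filter, mem_univ, true_and] at ha ⊢
  constructor
  · rintro ⟨⟨h0, hc, -⟩, rfl⟩
    exact ⟨h0, hc, rfl⟩
  · rintro ⟨h0, hc, rfl⟩
    exact ⟨⟨h0, hc, ha⟩, rfl⟩

theorem card_isChainTuple_last_succ (k : ℕ) (b : α) :
    #{w : Fin (k + 2) → α | P (w 0) ∧ IsChainTuple R w ∧ w (Fin.last (k + 1)) = b} =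
      #{w : Fin (k + 1) → α | P (w 0) ∧ IsChainTuple R w ∧ R (w (Fin.last k)) b} := by
  refine card_nbij' Fin.init (Fin.snoc · b) ?_ ?_ ?_ ?_ <;> intro w <;>
    simp only [coe_filter, mem_univ, true_and, Set.mem_ofPred_eq]
  · rintro ⟨h0, hc, rfl⟩
    rw [← Fin.snoc_init_self w, isChainTuple_snoc] at hc
    exact ⟨h0, hc⟩
  · rintro ⟨h0, hc, hb⟩
    simp [isChainTuple_snoc, h0, hc, hb]
  · rintro ⟨-, -, rfl⟩
    exact Fin.snoc_init_self w
  · intro _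
    exact Fin.init_snoc _ _

end Chain

inductive RootDir
  | here
  | left
  | right
  deriving DecidableEq

namespace RootDir

instance : Fintype RootDir := ⟨{here, left, right}, fun x => by cases x <;> simp⟩

def CanPrecede (a b : RootDir) : Prop := ¬(a = right ∧ b = left)

instance : DecidableRel CanPrecede := fun _ _ => inferInstanceAs (Decidable (¬(_ ∧ _)))

theorem univ_eq : (univ : Finset RootDir) = {here, left, right} := rfl

end RootDir

open RootDir

def pointerGraph {n : ℕ} (w : Fin n → RootDir) : SimpleGraph (Fin n) :=
  fromRel fun a b => a.val + 1 = b.val ∧ (w a = right ∨ w b = left)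

section PointerGraph

variable {n : ℕ} {w : Fin n → RootDir}

theorem pointerGraph_le : pointerGraph w ≤ pathGraph n := by
  intro a b h
  simp only [pointerGraph, fromRel_adj] at h
  rw [pathGraph_adj]
  omega

theorem pointerGraph_adj {a b : Fin n} (hab : a.val + 1 = b.val) :
    (pointerGraph w).Adj a b ↔ w a = right ∨ w b = left := by
  simp only [pointerGraph, fromRel_adj, hab, true_and, ne_eq]
  constructor
  · rintro ⟨-, h | ⟨h, -⟩⟩
    · exact h
    · omega
  · intro h
    exact ⟨fun hab' => by subst hab'; omega, Or.inl h⟩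

end PointerGraph

namespace RootedForest

variable {n : ℕ} (φ : RootedForest (pathGraph n))

theorem graph_adj_iff {a b : Fin n} (hab : a.val + 1 = b.val) :
    φ.graph.Adj a b ↔ a < φ.root a ∨ φ.root b < b := by
  simp only [Fin.lt_def]
  constructor
  · intro h
    have hroot := congrArg Fin.val (root_eq_root h.reachable)
    omega
  · rintro (h | h)
    · exact (φ.reachable_root a).adj_of_le_pathGraph φ.graph_le hab le_rfl
        (Fin.le_def.2 (by omega))
    · exact (φ.reachable_root b).symm.adj_of_le_pathGraph φ.graph_le hab
        (Fin.le_def.2 (by omega)) le_rfl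

open Classical in
noncomputable def toWord (v : Fin n) : RootDir :=
  if v ∈ φ.roots then here else if φ.root v < v then left else right

variable {φ} {v : Fin n}

theorem toWord_eq_here : φ.toWord v = here ↔ v ∈ φ.roots := by
  unfold toWord
  split_ifs <;> simp_all

theorem toWord_eq_left : φ.toWord v = left ↔ φ.root v < v := by
  unfold toWord
  split_ifs with hv hlt
  · simp [root_eq_self_iff.2 hv]
  · simpa using hlt
  · simpa using hlt

theorem toWord_eq_right : φ.toWord v = right ↔ v < φ.root v := by
  unfold toWord
  split_ifs with hv hlt
  · simp [root_eq_self_iff.2 hv]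
  · simp [hlt.asymm]
  · simpa using lt_of_le_of_ne (not_lt.1 hlt) fun h => hv (root_eq_self_iff.1 h.symm)

theorem pointerGraph_toWord : pointerGraph φ.toWord = φ.graph :=
  eq_of_le_pathGraph pointerGraph_le φ.graph_le fun a b hab => by
    rw [pointerGraph_adj hab, graph_adj_iff φ hab, toWord_eq_right, toWord_eq_left]

end RootedForest

open RootedForest

def IsRootWord {m : ℕ} (w : Fin (m + 1) → RootDir) : Prop :=
  w 0 ≠ left ∧ IsChainTuple CanPrecede w ∧ w (Fin.last m) ≠ right

instance {m : ℕ} : DecidablePred (IsRootWord (m := m)) :=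
  fun _ => inferInstanceAs (Decidable (_ ∧ _ ∧ _))

theorem eq_of_pointerGraph_reachable {m : ℕ} {w : Fin (m + 1) → RootDir} {r s : Fin (m + 1)}
    (hr : w r = here) (hs : w s = here) (h : (pointerGraph w).Reachable r s) : r = s := by
  wlog hrs : r ≤ s generalizing r s
  · exact (this hs hr h.symm (le_of_not_ge hrs)).symm
  refine hrs.eq_or_lt.resolve_right fun hlt => ?_
  -- The edge `(k, k + 1)` with `r ≤ k < s` is present because `k` points right or `k + 1`
  -- points left; but `k` is `r` or, inductively, points left.
  have key : ∀ k, r < k → k ≤ s → w k = left := by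
    intro k
    induction k using Fin.induction with
    | zero => exact fun h => absurd h (Fin.not_lt_zero r)
    | succ i ih =>
      intro hrk hks
      have hadj :=
        h.adj_of_le_pathGraph pointerGraph_le (by simp) (Fin.le_castSucc_iff.2 hrk) hks
      refine ((pointerGraph_adj (by simp)).1 hadj).resolve_left fun hright => ?_
      rcases (Fin.le_castSucc_iff.2 hrk).eq_or_lt with heq | hlt'
      · rw [← heq, hr] at hright
        exact nomatch hright
      · rw [ih hlt' (Fin.castSucc_lt_succ.le.trans hks)] at hright
        exact nomatch hright
  rw [key s hlt le_rfl] at hs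
  exact nomatch hs

namespace IsRootWord

variable {m : ℕ} {w : Fin (m + 1) → RootDir}

theorem exists_root_left (hw : IsRootWord w) {v : Fin (m + 1)} (hv : w v = left) :
    ∃ r < v, w r = here ∧ (pointerGraph w).Reachable r v := by
  induction v using Fin.induction with
  | zero => exact absurd hv hw.1
  | succ i ih =>
    have hadj : (pointerGraph w).Adj i.castSucc i.succ :=
      (pointerGraph_adj (by simp)).2 (Or.inr hv)
    cases hi : w i.castSucc with
    | here => exact ⟨i.castSucc, Fin.castSucc_lt_succ, hi, hadj.reachable⟩
    | left =>
      obtain ⟨r, hr, hhere, hreach⟩ := ih hi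
      exact ⟨r, hr.trans Fin.castSucc_lt_succ, hhere, hreach.trans hadj.reachable⟩
    | right => exact absurd ⟨hi, hv⟩ (hw.2.1 i)

theorem exists_root_right (hw : IsRootWord w) {v : Fin (m + 1)} (hv : w v = right) :
    ∃ r, v < r ∧ w r = here ∧ (pointerGraph w).Reachable v r := by
  induction v using Fin.reverseInduction with
  | last => exact absurd hv hw.2.2
  | cast i ih =>
    have hadj : (pointerGraph w).Adj i.castSucc i.succ :=
      (pointerGraph_adj (by simp)).2 (Or.inl hv)
    cases hi : w i.succ with
    | here => exact ⟨i.succ, Fin.castSucc_lt_succ, hi, hadj.reachable⟩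
    | left => exact absurd ⟨hv, hi⟩ (hw.2.1 i)
    | right =>
      obtain ⟨r, hr, hhere, hreach⟩ := ih hi
      exact ⟨r, Fin.castSucc_lt_succ.trans hr, hhere, hadj.reachable.trans hreach⟩

theorem existsUnique_root (hw : IsRootWord w) (v : Fin (m + 1)) :
    ∃! r, r ∈ {u | w u = here} ∧ (pointerGraph w).Reachable v r := by
  obtain ⟨r, hr, hvr⟩ : ∃ r, w r = here ∧ (pointerGraph w).Reachable v r := by
    cases hv : w v with
    | here => exact ⟨v, hv, .rfl⟩
    | left =>
      obtain ⟨r, -, hr, h⟩ := hw.exists_root_left hv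
      exact ⟨r, hr, h.symm⟩
    | right =>
      obtain ⟨r, -, hr, h⟩ := hw.exists_root_right hv
      exact ⟨r, hr, h⟩
  exact ⟨r, ⟨hr, hvr⟩,
    fun s ⟨hs, hvs⟩ => eq_of_pointerGraph_reachable hs hr (hvs.symm.trans hvr)⟩

def toForest (hw : IsRootWord w) : RootedForest (pathGraph (m + 1)) :=
  ofGraph (pointerGraph w) pointerGraph_le (isAcyclic_of_le_pathGraph pointerGraph_le)
    {v | w v = here} hw.existsUnique_root

theorem toWord_toForest (hw : IsRootWord w) : hw.toForest.toWord = w := by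
  have hg : hw.toForest.graph = pointerGraph w := graph_ofGraph
  funext v
  cases hv : w v with
  | here => exact toWord_eq_here.2 hv
  | left =>
    obtain ⟨r, hrv, hr, hreach⟩ := hw.exists_root_left hv
    exact toWord_eq_left.2 (eq_root (φ := hw.toForest) hr (hg ▸ hreach.symm) ▸ hrv)
  | right =>
    obtain ⟨r, hvr, hr, hreach⟩ := hw.exists_root_right hv
    exact toWord_eq_right.2 (eq_root (φ := hw.toForest) hr (hg ▸ hreach) ▸ hvr)

end IsRootWord

namespace RootedForest

variable {m : ℕ} (φ : RootedForest (pathGraph (m + 1)))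

theorem isRootWord_toWord : IsRootWord φ.toWord := by
  refine ⟨fun h => Fin.not_lt_zero _ (toWord_eq_left.1 h), fun i ⟨hr, hl⟩ => ?_,
    fun h => not_lt.2 (Fin.le_last _) (toWord_eq_right.1 h)⟩
  have hlt := toWord_eq_right.1 hr
  have hadj := (φ.graph_adj_iff (a := i.castSucc) (b := i.succ) (by simp)).2 (Or.inl hlt)
  rw [root_eq_root hadj.reachable, Fin.castSucc_lt_iff_succ_le] at hlt
  exact not_lt.2 hlt (toWord_eq_left.1 hl)

theorem toForest_toWord : φ.isRootWord_toWord.toForest = φ :=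
  ext_graph (graph_ofGraph.trans pointerGraph_toWord) (Set.ext fun _ => toWord_eq_here)

end RootedForest

noncomputable def forestEquivRootWord (m : ℕ) :
    RootedForest (pathGraph (m + 1)) ≃ {w : Fin (m + 1) → RootDir // IsRootWord w} where
  toFun φ := ⟨φ.toWord, φ.isRootWord_toWord⟩
  invFun w := w.2.toForest
  left_inv := toForest_toWord
  right_inv w := Subtype.ext w.2.toWord_toForest

def prefixCount (k : ℕ) (b : RootDir) : ℕ :=
  #{w : Fin (k + 1) → RootDir | w 0 ≠ left ∧ IsChainTuple CanPrecede w ∧ w (Fin.last k) = b}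

theorem prefixCount_succ (k : ℕ) (b : RootDir) :
    prefixCount (k + 1) b = ∑ a with CanPrecede a b, prefixCount k a :=
  (card_isChainTuple_last_succ CanPrecede (· ≠ left) k b).trans
    (card_isChainTuple_rel_last CanPrecede (· ≠ left) k b)

theorem prefixCount_eq_fib (k : ℕ) :
    prefixCount k here = Nat.fib (2 * k + 1) ∧ prefixCount k left = Nat.fib (2 * k) ∧
      prefixCount k right = Nat.fib (2 * k + 1) := by
  induction k with
  | zero => decide
  | succ k ih =>
    obtain ⟨hh, hl, hr⟩ := ih
    have h₂ : Nat.fib (2 * (k + 1)) = Nat.fib (2 * k) + Nat.fib (2 * k + 1) := Nat.fib_add_two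
    have h₃ : Nat.fib (2 * (k + 1) + 1) = Nat.fib (2 * k + 1) + Nat.fib (2 * (k + 1)) :=
      Nat.fib_add_two
    simp [prefixCount_succ, univ_eq, filter_insert, filter_singleton, CanPrecede, hh, hl, hr,
      h₂, h₃]
    omega

theorem card_isRootWord (m : ℕ) :
    #{w : Fin (m + 1) → RootDir | IsRootWord w} = Nat.fib (2 * (m + 1)) :=
  calc #{w : Fin (m + 1) → RootDir | IsRootWord w}
    _ = #{w : Fin (m + 1) → RootDir |
          w 0 ≠ left ∧ IsChainTuple CanPrecede w ∧ CanPrecede (w (Fin.last m)) left} :=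
      congrArg card (filter_congr fun w _ => by simp [IsRootWord, CanPrecede])
    _ = prefixCount (m + 1) left :=
      (card_isChainTuple_last_succ CanPrecede (· ≠ left) m left).symm
    _ = Nat.fib (2 * (m + 1)) := (prefixCount_eq_fib (m + 1)).2.1

theorem path_forest_count (n : ℕ) (hn : 1 ≤ n) :
    Nat.card (RootedForest (SimpleGraph.pathGraph n)) = Nat.fib (2 * n) := by
  obtain ⟨m, rfl⟩ := Nat.exists_eq_add_of_le' hn
  rw [Nat.card_congr (forestEquivRootWord m), Nat.card_eq_fintype_card, Fintype.card_subtype,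
    card_isRootWord]
end

section
/- For every n ≥ 2, the number of spanning rooted forests of the path graph P_n in which both endpoint vertices 1 and n are roots equals F(2(n−1)). -/
/-!
Record a rooted forest of the path `0 — 1 — ⋯ — k` by the word `s v = sign (root(v) - v)` over
`{-1, 0, 1}`. The forest can be read back from its word: the edge `{i, i + 1}` is present iff
`s i = 1` or `s (i + 1) = -1`, and the roots are the zeros of `s`. The words that occur are exactly
those in which no two neighbours point at each other (no factor `1, -1`) and neither end points
off the path. When both ends are roots, such a word is a free word of length `m = n - 2` avoiding
`1, -1`; splitting off the first letter shows that there are `F(2m + 2)` of them, `F(2m + 1)` of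
which do not start with `-1`.
-/

open SimpleGraph

namespace SimpleGraph

variable {k : ℕ}

lemma pathGraph_adj_castSucc_succ (i : Fin k) : (pathGraph (k + 1)).Adj i.castSucc i.succ := by
  simp [pathGraph_adj]

lemma sym2_castSucc_succ_injective :
    Function.Injective fun i : Fin k => s(i.castSucc, i.succ) := by
  intro i j hij
  rcases Sym2.eq_iff.mp hij with ⟨h, -⟩ | ⟨h, h'⟩
  · exact Fin.castSucc_injective _ h
  · have h₁ := congrArg Fin.val h
    have h₂ := congrArg Fin.val h'
    simp only [Fin.val_castSucc, Fin.val_succ] at h₁ h₂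
    omega

lemma exists_eq_sym2_castSucc_succ {e : Sym2 (Fin (k + 1))}
    (he : e ∈ (pathGraph (k + 1)).edgeSet) : ∃ i : Fin k, e = s(i.castSucc, i.succ) := by
  induction e using Sym2.ind with
  | h u v =>
    rw [mem_edgeSet, pathGraph_adj] at he
    rcases he with h | h
    · refine ⟨⟨u, by omega⟩, Sym2.eq_iff.mpr (.inl ⟨rfl, Fin.ext ?_⟩)⟩
      simp only [Fin.val_succ]
      omega
    · refine ⟨⟨v, by omega⟩, Sym2.eq_iff.mpr (.inr ⟨Fin.ext ?_, rfl⟩)⟩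
      simp only [Fin.val_succ]
      omega

lemma fromEdgeSet_adj_castSucc_succ {E : Set (Sym2 (Fin (k + 1)))} (i : Fin k) :
    (fromEdgeSet E).Adj i.castSucc i.succ ↔ s(i.castSucc, i.succ) ∈ E := by
  simp [fromEdgeSet_adj, Fin.castSucc_lt_succ.ne]

lemma Reachable.le_castSucc_iff {H : SimpleGraph (Fin (k + 1))} (hH : H ≤ pathGraph (k + 1))
    {i : Fin k} (hi : ¬H.Adj i.castSucc i.succ) {u v : Fin (k + 1)} (h : H.Reachable u v) :
    u ≤ i.castSucc ↔ v ≤ i.castSucc := by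
  obtain ⟨p⟩ := h
  induction p with
  | nil => rfl
  | @cons a b _ hab _ ih =>
    refine Iff.trans ?_ ih
    by_contra hne
    have hpath := hH hab
    rw [pathGraph_adj] at hpath
    simp only [Fin.le_def, Fin.val_castSucc] at hne
    rcases hpath with h | h
    · obtain rfl : a = i.castSucc := Fin.ext (by rw [Fin.val_castSucc]; omega)
      obtain rfl : b = i.succ := Fin.ext (by rw [Fin.val_succ]; omega)
      exact hi hab
    · obtain rfl : b = i.castSucc := Fin.ext (by rw [Fin.val_castSucc]; omega)
      obtain rfl : a = i.succ := Fin.ext (by rw [Fin.val_succ]; omega)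
      exact hi hab.symm

lemma isAcyclic_pathGraph (k : ℕ) : (pathGraph (k + 1)).IsAcyclic := by
  rw [isAcyclic_iff_forall_adj_isBridge]
  intro u v huv
  obtain ⟨i, hi⟩ := exists_eq_sym2_castSucc_succ ((pathGraph _).mem_edgeSet.mpr huv)
  rw [hi, isBridge_iff]
  intro h
  have := (h.le_castSucc_iff (deleteEdges_le _) (by simp)).mp le_rfl
  exact this.not_gt Fin.castSucc_lt_succ

end SimpleGraph

namespace RootedForest

attribute [ext] RootedForest

variable {V : Type*} {G : SimpleGraph V} (F : RootedForest G) {u v r : V}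

lemma fromEdgeSet_edges_le : fromEdgeSet F.edges ≤ G :=
  (fromEdgeSet_le _).mpr (Set.sdiff_subset.trans F.edges_sub)

noncomputable def rootOf (v : V) : V := (F.unique_root v).exists.choose

lemma rootOf_mem_roots (v : V) : F.rootOf v ∈ F.roots :=
  (F.unique_root v).exists.choose_spec.1

lemma reachable_rootOf (v : V) : (fromEdgeSet F.edges).Reachable v (F.rootOf v) :=
  (F.unique_root v).exists.choose_spec.2

lemma rootOf_eq_of_reachable (hr : r ∈ F.roots) (h : (fromEdgeSet F.edges).Reachable v r) :
    F.rootOf v = r :=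
  (F.unique_root v).unique ⟨F.rootOf_mem_roots v, F.reachable_rootOf v⟩ ⟨hr, h⟩

lemma rootOf_eq_self_iff : F.rootOf v = v ↔ v ∈ F.roots :=
  ⟨fun h => h ▸ F.rootOf_mem_roots v, fun h => F.rootOf_eq_of_reachable h .rfl⟩

lemma rootOf_eq_rootOf (h : (fromEdgeSet F.edges).Reachable u v) : F.rootOf u = F.rootOf v :=
  F.rootOf_eq_of_reachable (F.rootOf_mem_roots v) (h.trans (F.reachable_rootOf v))

end RootedForest

def NoFacingArrows {k : ℕ} (s : Fin (k + 1) → SignType) : Prop :=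
  ∀ i : Fin k, ¬(s i.castSucc = 1 ∧ s i.succ = -1)

namespace RootedForest

variable {k : ℕ} (F : RootedForest (pathGraph (k + 1))) {v : Fin (k + 1)}

noncomputable def rootDirection (v : Fin (k + 1)) : SignType :=
  SignType.sign ((F.rootOf v : ℤ) - v)

lemma rootDirection_eq_zero_iff : F.rootDirection v = 0 ↔ v ∈ F.roots := by
  rw [rootDirection, sign_eq_zero_iff, sub_eq_zero, Nat.cast_inj, Fin.val_inj, rootOf_eq_self_iff]

lemma rootDirection_eq_one_iff : F.rootDirection v = 1 ↔ v < F.rootOf v := by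
  rw [rootDirection, sign_eq_one_iff, sub_pos, Nat.cast_lt, Fin.val_fin_lt]

lemma rootDirection_eq_neg_one_iff : F.rootDirection v = -1 ↔ F.rootOf v < v := by
  rw [rootDirection, sign_eq_neg_one_iff, sub_neg, Nat.cast_lt, Fin.val_fin_lt]

lemma rootDirection_zero_ne_neg_one : F.rootDirection 0 ≠ -1 := by
  simp [rootDirection_eq_neg_one_iff]

lemma rootDirection_last_ne_one : F.rootDirection (Fin.last k) ≠ 1 := by
  simp [rootDirection_eq_one_iff, Fin.le_last]

lemma sym2_castSucc_succ_mem_edges_iff (i : Fin k) :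
    s(i.castSucc, i.succ) ∈ F.edges ↔
      F.rootDirection i.castSucc = 1 ∨ F.rootDirection i.succ = -1 := by
  rw [rootDirection_eq_one_iff, rootDirection_eq_neg_one_iff, ← fromEdgeSet_adj_castSucc_succ]
  constructor
  · intro hadj
    rw [← F.rootOf_eq_rootOf hadj.reachable, ← Fin.le_castSucc_iff]
    exact lt_or_ge _ _
  · rintro (h | h) <;> by_contra hadj
    · have := (F.reachable_rootOf i.castSucc).le_castSucc_iff F.fromEdgeSet_edges_le hadj
      exact h.not_ge (this.mp le_rfl)
    · have := (F.reachable_rootOf i.succ).le_castSucc_iff F.fromEdgeSet_edges_le hadj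
      rw [Fin.le_castSucc_iff, Fin.le_castSucc_iff] at this
      exact lt_irrefl _ (this.mpr h)

lemma noFacingArrows_rootDirection : NoFacingArrows F.rootDirection := by
  rintro i ⟨h₁, h₂⟩
  have hadj : (fromEdgeSet F.edges).Adj i.castSucc i.succ :=
    (fromEdgeSet_adj_castSucc_succ i).mpr ((F.sym2_castSucc_succ_mem_edges_iff i).mpr (.inl h₁))
  rw [rootDirection_eq_one_iff] at h₁
  rw [rootDirection_eq_neg_one_iff, ← F.rootOf_eq_rootOf hadj.reachable,
    ← Fin.le_castSucc_iff] at h₂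
  exact h₁.not_ge h₂

lemma rootDirection_injective :
    Function.Injective (rootDirection : RootedForest (pathGraph (k + 1)) → _) := by
  have edges_subset {F F' : RootedForest (pathGraph (k + 1))}
      (h : F.rootDirection = F'.rootDirection) : F.edges ⊆ F'.edges := by
    intro e he
    obtain ⟨i, rfl⟩ := exists_eq_sym2_castSucc_succ (F.edges_sub he)
    rwa [sym2_castSucc_succ_mem_edges_iff, ← h, ← sym2_castSucc_succ_mem_edges_iff]
  intro F F' h
  ext x
  · exact ⟨(edges_subset h ·), (edges_subset h.symm ·)⟩
  · rw [← rootDirection_eq_zero_iff, h, rootDirection_eq_zero_iff]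

variable {s : Fin (k + 1) → SignType}

def arrowEdges (s : Fin (k + 1) → SignType) : Set (Sym2 (Fin (k + 1))) :=
  (fun i : Fin k => s(i.castSucc, i.succ)) '' {i | s i.castSucc = 1 ∨ s i.succ = -1}

lemma arrowEdges_subset : arrowEdges s ⊆ (pathGraph (k + 1)).edgeSet := by
  rintro _ ⟨i, -, rfl⟩
  exact pathGraph_adj_castSucc_succ i

lemma fromEdgeSet_arrowEdges_le : fromEdgeSet (arrowEdges s) ≤ pathGraph (k + 1) :=
  (fromEdgeSet_le _).mpr (Set.sdiff_subset.trans arrowEdges_subset)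

lemma adj_arrowEdges_iff (i : Fin k) :
    (fromEdgeSet (arrowEdges s)).Adj i.castSucc i.succ ↔ s i.castSucc = 1 ∨ s i.succ = -1 := by
  rw [fromEdgeSet_adj_castSucc_succ, arrowEdges, sym2_castSucc_succ_injective.mem_set_image]
  rfl

lemma exists_ge_reachable_of_ne_neg_one (hs : NoFacingArrows s) (hlast : s (Fin.last k) ≠ 1) :
    ∀ v, s v ≠ -1 → ∃ r, v ≤ r ∧ s r = 0 ∧ (fromEdgeSet (arrowEdges s)).Reachable v r := by
  refine Fin.reverseInduction (fun h => ⟨_, le_rfl, ?_, .rfl⟩) fun i ih hi => ?_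
  · rcases (s (Fin.last k)).trichotomy with h' | h' | h' <;> simp_all
  rcases (s i.castSucc).trichotomy with h | h | h
  · exact absurd h hi
  · exact ⟨_, le_rfl, h, .rfl⟩
  obtain ⟨r, hr, hr₀, hreach⟩ := ih fun h' => hs i ⟨h, h'⟩
  exact ⟨r, Fin.castSucc_lt_succ.le.trans hr, hr₀,
    ((adj_arrowEdges_iff i).mpr (.inl h)).reachable.trans hreach⟩

lemma exists_le_reachable_of_ne_one (hs : NoFacingArrows s) (h₀ : s 0 ≠ -1) :
    ∀ v, s v ≠ 1 → ∃ r, r ≤ v ∧ s r = 0 ∧ (fromEdgeSet (arrowEdges s)).Reachable v r := by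
  refine Fin.induction (fun h => ⟨_, le_rfl, ?_, .rfl⟩) fun i ih hi => ?_
  · rcases (s 0).trichotomy with h' | h' | h' <;> simp_all
  rcases (s i.succ).trichotomy with h | h | h
  · obtain ⟨r, hr, hr₀, hreach⟩ := ih fun h' => hs i ⟨h', h⟩
    exact ⟨r, hr.trans Fin.castSucc_lt_succ.le, hr₀,
      ((adj_arrowEdges_iff i).mpr (.inr h)).symm.reachable.trans hreach⟩
  · exact ⟨_, le_rfl, h, .rfl⟩
  · exact absurd h hi

lemma exists_reachable_sign_sub_eq (hs : NoFacingArrows s) (h₀ : s 0 ≠ -1)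
    (hlast : s (Fin.last k) ≠ 1) (v : Fin (k + 1)) :
    ∃ r, s r = 0 ∧ (fromEdgeSet (arrowEdges s)).Reachable v r ∧
      SignType.sign ((r : ℤ) - v) = s v := by
  rcases (s v).trichotomy with h | h | h
  · obtain ⟨r, hr, hr₀, hreach⟩ := exists_le_reachable_of_ne_one hs h₀ v (by simp [h])
    have hlt : r < v := hr.lt_of_ne (by rintro rfl; simp_all)
    refine ⟨r, hr₀, hreach, ?_⟩
    rw [h, sign_eq_neg_one_iff, sub_neg, Nat.cast_lt]
    exact hlt
  · exact ⟨v, h, .rfl, by simp [h]⟩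
  · obtain ⟨r, hr, hr₀, hreach⟩ := exists_ge_reachable_of_ne_neg_one hs hlast v (by simp [h])
    have hlt : v < r := hr.lt_of_ne (by rintro rfl; simp_all)
    refine ⟨r, hr₀, hreach, ?_⟩
    rw [h, sign_eq_one_iff, sub_pos, Nat.cast_lt]
    exact hlt

/-- Between two connected roots `r₁ < r₂`, every vertex after `r₁` would have to point left. -/
lemma eq_of_reachable_of_le {r₁ r₂ : Fin (k + 1)} (h₁ : s r₁ = 0) (h₂ : s r₂ = 0)
    (h : (fromEdgeSet (arrowEdges s)).Reachable r₁ r₂) (hle : r₁ ≤ r₂) : r₁ = r₂ := by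
  have left_of_r₁ : ∀ j, r₁ < j → j ≤ r₂ → s j = -1 := by
    refine Fin.induction (fun h => absurd h (Fin.not_lt_zero _)) fun i ih hlt hle => ?_
    have hadj : (fromEdgeSet (arrowEdges s)).Adj i.castSucc i.succ := by
      by_contra hadj
      have := (h.le_castSucc_iff fromEdgeSet_arrowEdges_le hadj).mp (Fin.le_castSucc_iff.mpr hlt)
      exact (Fin.castSucc_lt_iff_succ_le.mpr hle).not_ge this
    refine ((adj_arrowEdges_iff i).mp hadj).resolve_left fun h₁' => ?_
    rcases (Fin.le_castSucc_iff.mpr hlt).eq_or_lt with rfl | hlt'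
    · simp_all
    · simp_all [ih hlt' (Fin.castSucc_lt_succ.le.trans hle)]
  by_contra hne
  simpa [h₂] using left_of_r₁ r₂ (hle.lt_of_ne hne) le_rfl

def ofArrows (s : Fin (k + 1) → SignType) (hs : NoFacingArrows s) (h₀ : s 0 ≠ -1)
    (hlast : s (Fin.last k) ≠ 1) : RootedForest (pathGraph (k + 1)) where
  edges := arrowEdges s
  roots := {v | s v = 0}
  edges_sub := arrowEdges_subset
  acyclic := (isAcyclic_pathGraph k).anti fromEdgeSet_arrowEdges_le
  unique_root v := by
    obtain ⟨r, hr₀, hreach, -⟩ := exists_reachable_sign_sub_eq hs h₀ hlast v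
    refine ⟨r, ⟨hr₀, hreach⟩, fun r' ⟨hr'₀, hreach'⟩ => ?_⟩
    have h := hreach'.symm.trans hreach
    rcases le_total r' r with hle | hle
    · exact eq_of_reachable_of_le hr'₀ hr₀ h hle
    · exact (eq_of_reachable_of_le hr₀ hr'₀ h.symm hle).symm

lemma rootDirection_ofArrows (hs : NoFacingArrows s) (h₀ : s 0 ≠ -1)
    (hlast : s (Fin.last k) ≠ 1) : (ofArrows s hs h₀ hlast).rootDirection = s := by
  funext v
  obtain ⟨r, hr₀, hreach, hsign⟩ := exists_reachable_sign_sub_eq hs h₀ hlast v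
  rw [rootDirection, (ofArrows s hs h₀ hlast).rootOf_eq_of_reachable hr₀ hreach, hsign]

noncomputable def equivNoFacingArrows (k : ℕ) :
    RootedForest (pathGraph (k + 1)) ≃
      {s : Fin (k + 1) → SignType // NoFacingArrows s ∧ s 0 ≠ -1 ∧ s (Fin.last k) ≠ 1} :=
  Equiv.ofBijective
    (fun F => ⟨F.rootDirection, F.noFacingArrows_rootDirection, F.rootDirection_zero_ne_neg_one,
      F.rootDirection_last_ne_one⟩)
    ⟨fun _ _ h => rootDirection_injective (congrArg Subtype.val h),
      fun ⟨s, hs, h₀, hlast⟩ => ⟨ofArrows s hs h₀ hlast, Subtype.ext (rootDirection_ofArrows ..)⟩⟩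

end RootedForest

lemma noFacingArrows_cons {k : ℕ} (p : SignType) (u : Fin (k + 1) → SignType) :
    NoFacingArrows (Fin.cons p u : Fin (k + 2) → SignType) ↔
      ¬(p = 1 ∧ u 0 = -1) ∧ NoFacingArrows u := by
  simp only [NoFacingArrows, Fin.forall_fin_succ (n := k), Fin.castSucc_zero, Fin.cons_zero,
    Fin.cons_succ, ← Fin.succ_castSucc]

lemma Nat.card_subtype_eq_sum_card_cons {α : Type*} [Fintype α] {k : ℕ}
    (P : (Fin (k + 1) → α) → Prop) :
    Nat.card {u // P u} = ∑ a, Nat.card {t : Fin k → α // P (Fin.cons a t)} := by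
  rw [← Nat.card_sigma]
  exact Nat.card_congr (((Fin.consEquiv fun _ => α).symm.subtypeEquiv fun u => by simp).trans
    (Equiv.subtypeProdEquivSigmaSubtype fun a t => P (Fin.cons a t)))

lemma card_noFacingArrows_cons (k : ℕ) (p : SignType) :
    Nat.card {u : Fin (k + 1) → SignType //
        u (Fin.last k) = 0 ∧ NoFacingArrows (Fin.cons p u : Fin (k + 2) → SignType)} =
      if p = 1 then Nat.fib (2 * k + 1) else Nat.fib (2 * k + 2) := by
  induction k generalizing p with
  | zero =>
    simp only [mul_zero, zero_add, Nat.fib_one, Nat.fib_two, ite_self]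
    refine Nat.card_eq_one_iff_exists.mpr ⟨⟨0, rfl, by simp [NoFacingArrows]⟩,
      fun u => Subtype.ext (funext fun i => ?_)⟩
    exact Subsingleton.elim (α := Fin 1) i (Fin.last 0) ▸ u.2.1
  | succ k ih =>
    rw [Nat.card_subtype_eq_sum_card_cons]
    simp only [Fin.cons_last, noFacingArrows_cons p, Fin.cons_zero]
    rw [SignType.univ_eq, Finset.sum_insert (by decide), Finset.sum_insert (by decide),
      Finset.sum_singleton]
    have h₁ : Nat.fib (2 * k + 3) = Nat.fib (2 * k + 1) + Nat.fib (2 * k + 2) := Nat.fib_add_two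
    have h₂ : Nat.fib (2 * k + 4) = Nat.fib (2 * k + 2) + Nat.fib (2 * k + 3) := Nat.fib_add_two
    rw [show 2 * (k + 1) + 1 = 2 * k + 3 by ring, show 2 * (k + 1) + 2 = 2 * k + 4 by ring]
    cases p <;> simp [ih] <;> omega

lemma card_noFacingArrows_ends_eq_zero (k : ℕ) :
    Nat.card {s : Fin (k + 2) → SignType //
        NoFacingArrows s ∧ s 0 = 0 ∧ s (Fin.last (k + 1)) = 0} = Nat.fib (2 * k + 2) := by
  rw [Nat.card_subtype_eq_sum_card_cons, Fintype.sum_eq_single 0]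
  · simpa [and_comm] using card_noFacingArrows_cons k 0
  · intro a ha
    simp [ha]

lemma card_rootedForest_pathGraph_ends_mem_roots (k : ℕ) :
    Nat.card {F : RootedForest (pathGraph (k + 1)) // 0 ∈ F.roots ∧ Fin.last k ∈ F.roots} =
      Nat.card {s : Fin (k + 1) → SignType // NoFacingArrows s ∧ s 0 = 0 ∧ s (Fin.last k) = 0} := by
  refine Nat.card_congr <| ((RootedForest.equivNoFacingArrows k).subtypeEquiv fun F => ?_).trans
    (Equiv.subtypeSubtypeEquivSubtype fun hs => ⟨hs.1, by simp [hs.2.1], by simp [hs.2.2]⟩)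
  exact ⟨fun h => ⟨F.noFacingArrows_rootDirection, F.rootDirection_eq_zero_iff.mpr h.1,
      F.rootDirection_eq_zero_iff.mpr h.2⟩,
    fun h => ⟨F.rootDirection_eq_zero_iff.mp h.2.1, F.rootDirection_eq_zero_iff.mp h.2.2⟩⟩

theorem path_forest_count_both_ends_roots (n : ℕ) (hn : 2 ≤ n) :
    Nat.card {F : RootedForest (SimpleGraph.pathGraph n) //
        (⟨0, by omega⟩ : Fin n) ∈ F.roots ∧ (⟨n - 1, by omega⟩ : Fin n) ∈ F.roots} =
      Nat.fib (2 * (n - 1)) := by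
  obtain ⟨k, rfl⟩ : ∃ k, n = k + 2 := ⟨n - 2, by omega⟩
  have hlast : (⟨k + 2 - 1, by omega⟩ : Fin (k + 2)) = Fin.last (k + 1) := Fin.ext (by simp)
  rw [hlast, Fin.zero_eta, card_rootedForest_pathGraph_ends_mem_roots,
    card_noFacingArrows_ends_eq_zero, show 2 * (k + 2 - 1) = 2 * k + 2 by omega]
end

section
/- For all integers n ≥ 3 and 0 ≤ d ≤ n, with t = |n − 2d|: if n is odd then F(2d) + F(2(n−d)) = F(t)·L(n), and if n is even then F(2d) + F(2(n−d)) = L(t)·F(n). -/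
/-- The Lucas numbers: L(0)=2, L(1)=1, L(n+2)=L(n)+L(n+1). -/
def lucas : ℕ → ℕ
  | 0 => 2
  | 1 => 1
  | n + 2 => lucas n + lucas (n + 1)

lemma lucas_eq : ∀ t, lucas (t + 1) = Nat.fib t + Nat.fib (t + 2)
  | 0 => rfl
  | 1 => rfl
  | (t + 2) => by
      have h1 := lucas_eq t
      have h2 := lucas_eq (t + 1)
      show lucas (t + 1) + lucas (t + 2) = _
      rw [h1, h2]
      have a := Nat.fib_add_two (n := t)
      have b := Nat.fib_add_two (n := t + 1)
      have c := Nat.fib_add_two (n := t + 2)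
      ring_nf at a b c ⊢
      omega

lemma docagne (j : ℕ) : ∀ k, (Nat.fib (j + k) : ℤ) * Nat.fib (k + 1)
    - Nat.fib (j + k + 1) * Nat.fib k = (-1) ^ k * Nat.fib j
  | 0 => by simp
  | (k + 1) => by
      have ih := docagne j k
      have e1 : (Nat.fib (k + 2) : ℤ) = Nat.fib k + Nat.fib (k + 1) := by
        rw [Nat.fib_add_two]; push_cast; ring
      have e2 : (Nat.fib (j + k + 2) : ℤ) = Nat.fib (j + k) + Nat.fib (j + k + 1) := by
        rw [show j + k + 2 = (j + k) + 2 by ring, Nat.fib_add_two]; push_cast; ring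
      rw [show j + (k + 1) = j + k + 1 by ring, show j + k + 1 + 1 = j + k + 2 by ring,
        show k + 1 + 1 = k + 2 by ring, e1, e2, pow_succ]
      linarith [ih]

lemma fibadd (m t : ℕ) : (Nat.fib (m + t + 1) : ℤ)
    = Nat.fib m * Nat.fib t + Nat.fib (m + 1) * Nat.fib (t + 1) := by
  rw [Nat.fib_add]; push_cast; ring

lemma key_even (j t : ℕ) (ht : Odd t) :
    Nat.fib (j + 2 * (t + 1)) + Nat.fib j = Nat.fib (j + t + 1) * lucas (t + 1) := by
  have h1 : (Nat.fib (j + 2 * (t + 1)) : ℤ)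
      = Nat.fib (j + t + 1) * Nat.fib t + Nat.fib (j + t + 2) * Nat.fib (t + 1) := by
    have := fibadd (j + t + 1) t
    rw [show j + t + 1 + t + 1 = j + 2 * (t + 1) by ring] at this
    rw [this, show j + t + 1 + 1 = j + t + 2 by ring]
  have h2 := docagne j (t + 1)
  rw [ht.add_one.neg_one_pow, show j + (t + 1) = j + t + 1 by ring,
    show t + 1 + 1 = t + 2 by ring, show j + t + 1 + 1 = j + t + 2 by ring] at h2
  have h3 : (lucas (t + 1) : ℤ) = Nat.fib t + Nat.fib (t + 2) := by
    rw [lucas_eq]; push_cast; ring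
  have h : (Nat.fib (j + 2 * (t + 1)) + Nat.fib j : ℤ)
      = Nat.fib (j + t + 1) * lucas (t + 1) := by
    rw [h1, h3]; linear_combination (-1 : ℤ) * h2
  exact_mod_cast h

lemma key_odd (j t : ℕ) (ht : Even t) :
    Nat.fib (j + 2 * (t + 1)) + Nat.fib j = lucas (j + t + 1) * Nat.fib (t + 1) := by
  have h1 : (Nat.fib (j + 2 * (t + 1)) : ℤ)
      = Nat.fib (j + t + 1) * Nat.fib t + Nat.fib (j + t + 2) * Nat.fib (t + 1) := by
    have := fibadd (j + t + 1) t
    rw [show j + t + 1 + t + 1 = j + 2 * (t + 1) by ring] at this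
    rw [this, show j + t + 1 + 1 = j + t + 2 by ring]
  have h2 := docagne j t
  rw [ht.neg_one_pow] at h2
  have h3 : (lucas (j + t + 1) : ℤ) = Nat.fib (j + t) + Nat.fib (j + t + 2) := by
    rw [lucas_eq]; push_cast; ring
  have h : (Nat.fib (j + 2 * (t + 1)) + Nat.fib j : ℤ)
      = lucas (j + t + 1) * Nat.fib (t + 1) := by
    rw [h1, h3]; linear_combination (-1 : ℤ) * h2
  exact_mod_cast h

lemma key (j k : ℕ) :
    (Odd k → Nat.fib (j + 2 * k) + Nat.fib j = lucas (j + k) * Nat.fib k) ∧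
    (Even k → Nat.fib (j + 2 * k) + Nat.fib j = Nat.fib (j + k) * lucas k) := by
  constructor
  · intro hk
    obtain ⟨t, rfl⟩ : ∃ t, k = t + 1 := ⟨k - 1, by rcases hk with ⟨m, hm⟩; omega⟩
    exact key_odd j t (by rcases hk with ⟨m, hm⟩; exact ⟨m, by omega⟩)
  · intro hk
    rcases Nat.eq_zero_or_pos k with rfl | hpos
    · simp [lucas]; ring
    · obtain ⟨t, rfl⟩ : ∃ t, k = t + 1 := ⟨k - 1, by omega⟩
      exact key_even j t (by rw [Nat.odd_iff]; rw [Nat.even_iff] at hk; omega)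

theorem cycle_fij_lucas (n d : ℕ) (hn : 3 ≤ n) (hd : d ≤ n) :
    (Odd n → Nat.fib (2 * d) + Nat.fib (2 * (n - d)) =
        Nat.fib ((n : ℤ) - 2 * d).natAbs * lucas n) ∧
    (Even n → Nat.fib (2 * d) + Nat.fib (2 * (n - d)) =
        lucas ((n : ℤ) - 2 * d).natAbs * Nat.fib n) := by
  rcases le_or_gt (2 * d) n with h | h
  · have habs : ((n : ℤ) - 2 * d).natAbs = n - 2 * d := by omega
    obtain ⟨ko, ke⟩ := key (2 * d) (n - 2 * d)
    rw [show 2 * d + (n - 2 * d) = n by omega,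
      show 2 * d + 2 * (n - 2 * d) = 2 * (n - d) by omega] at ko ke
    rw [habs]
    constructor
    · intro hodd
      have hkodd : Odd (n - 2 * d) := by rw [Nat.odd_iff] at hodd ⊢; omega
      have := ko hkodd
      linarith [this, Nat.mul_comm (lucas n) (Nat.fib (n - 2 * d))]
    · intro heven
      have hkeven : Even (n - 2 * d) := by rw [Nat.even_iff] at heven ⊢; omega
      have := ke hkeven
      linarith [this, Nat.mul_comm (Nat.fib n) (lucas (n - 2 * d))]
  · have habs : ((n : ℤ) - 2 * d).natAbs = 2 * d - n := by omega
    obtain ⟨ko, ke⟩ := key (2 * (n - d)) (2 * d - n)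
    rw [show 2 * (n - d) + (2 * d - n) = n by omega,
      show 2 * (n - d) + 2 * (2 * d - n) = 2 * d by omega] at ko ke
    rw [habs]
    constructor
    · intro hodd
      have hkodd : Odd (2 * d - n) := by rw [Nat.odd_iff] at hodd ⊢; omega
      have := ko hkodd
      linarith [this, Nat.mul_comm (lucas n) (Nat.fib (2 * d - n))]
    · intro heven
      have hkeven : Even (2 * d - n) := by rw [Nat.even_iff] at heven ⊢; omega
      have := ke hkeven
      linarith [this, Nat.mul_comm (Nat.fib n) (lucas (2 * d - n))]
end

section
/- For any simple graph G on n vertices with Laplacian matrix L, the matrix (I + L)^{−1} is doubly stochastic: all its entries are nonnegative and every row and column sums to 1. -/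
/-!
Write `M = 1 + L`. Since `(L v) i = ∑_{k ~ i} (v i - v k)`, at a vertex `i` where `v` is
minimal we get `(M v) i ≤ v i`; hence `M v ≥ 0` forces `v ≥ 0` (a discrete minimum principle).
In particular `M` is injective, hence invertible, and each column `M⁻¹ eⱼ` of the inverse is
nonnegative. Rows of `M⁻¹` sum to `1` because `L 𝟙 = 0` gives `M 𝟙 = 𝟙`, and columns because
`M` is symmetric.
-/

open Finset Matrix

namespace SimpleGraph

variable {V R : Type*} [Fintype V] [DecidableEq V] (G : SimpleGraph V) [DecidableRel G.Adj]

theorem lapMatrix_mulVec_apply_eq_sum_sub [CommRing R] (v : V → R) (i : V) :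
    (G.lapMatrix R *ᵥ v) i = ∑ k ∈ G.neighborFinset i, (v i - v k) := by
  rw [lapMatrix_mulVec_apply, sum_sub_distrib, sum_const, card_neighborFinset_eq_degree,
    nsmul_eq_mul]

theorem one_add_lapMatrix_mulVec_const [CommRing R] :
    (1 + G.lapMatrix R) *ᵥ (fun _ ↦ 1) = fun _ ↦ 1 := by
  rw [add_mulVec, lapMatrix_mulVec_const_eq_zero, one_mulVec, add_zero]

theorem isSymm_one_add_lapMatrix [CommRing R] : (1 + G.lapMatrix R).IsSymm :=
  isSymm_one.add (G.isSymm_lapMatrix R)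

section LinearOrderedField

variable [Field R] [LinearOrder R] [IsStrictOrderedRing R]

theorem nonneg_of_one_add_lapMatrix_mulVec_nonneg {v : V → R}
    (hv : ∀ i, 0 ≤ ((1 + G.lapMatrix R) *ᵥ v) i) (i : V) : 0 ≤ v i := by
  have : Nonempty V := ⟨i⟩
  obtain ⟨i₀, hi₀⟩ := Finite.exists_min v
  have hL : (G.lapMatrix R *ᵥ v) i₀ ≤ 0 := by
    rw [lapMatrix_mulVec_apply_eq_sum_sub]
    exact sum_nonpos fun k _ ↦ sub_nonpos.mpr (hi₀ k)
  have hMv := hv i₀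
  rw [add_mulVec, one_mulVec, Pi.add_apply] at hMv
  have hmin : 0 ≤ v i₀ := by linarith
  exact hmin.trans (hi₀ i)

theorem eq_zero_of_one_add_lapMatrix_mulVec_eq_zero {v : V → R}
    (hv : (1 + G.lapMatrix R) *ᵥ v = 0) : v = 0 := by
  have hneg : (1 + G.lapMatrix R) *ᵥ (-v) = 0 := by rw [mulVec_neg, hv, neg_zero]
  funext i
  have hle := G.nonneg_of_one_add_lapMatrix_mulVec_nonneg (v := -v) (by simp [hneg]) i
  have hge := G.nonneg_of_one_add_lapMatrix_mulVec_nonneg (v := v) (by simp [hv]) i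
  rw [Pi.neg_apply, neg_nonneg] at hle
  exact le_antisymm hle hge

theorem isUnit_det_one_add_lapMatrix : IsUnit (1 + G.lapMatrix R).det := by
  rw [← isUnit_iff_isUnit_det, ← mulVec_injective_iff_isUnit, ← coe_mulVecLin,
    ← LinearMap.ker_eq_bot, LinearMap.ker_eq_bot']
  exact fun v ↦ G.eq_zero_of_one_add_lapMatrix_mulVec_eq_zero

theorem inv_one_add_lapMatrix_nonneg (i j : V) : 0 ≤ (1 + G.lapMatrix R)⁻¹ i j := by
  rw [← col_apply (1 + G.lapMatrix R)⁻¹ j i, ← mulVec_single_one]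
  refine G.nonneg_of_one_add_lapMatrix_mulVec_nonneg (fun k ↦ ?_) i
  rw [mulVec_mulVec, mul_nonsing_inv _ G.isUnit_det_one_add_lapMatrix, one_mulVec]
  exact (Pi.single_nonneg.mpr zero_le_one : (0 : V → R) ≤ Pi.single j 1) k

theorem inv_one_add_lapMatrix_mulVec_const :
    (1 + G.lapMatrix R)⁻¹ *ᵥ (fun _ ↦ 1) = fun _ ↦ 1 := by
  conv_lhs => rw [← G.one_add_lapMatrix_mulVec_const]
  rw [mulVec_mulVec, nonsing_inv_mul _ G.isUnit_det_one_add_lapMatrix, one_mulVec]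

theorem sum_inv_one_add_lapMatrix_row (i : V) : ∑ j, (1 + G.lapMatrix R)⁻¹ i j = 1 := by
  simpa [mulVec, dotProduct] using congrFun (G.inv_one_add_lapMatrix_mulVec_const (R := R)) i

theorem sum_inv_one_add_lapMatrix_col (j : V) : ∑ i, (1 + G.lapMatrix R)⁻¹ i j = 1 := by
  have hsymm := (G.isSymm_one_add_lapMatrix (R := R)).inv
  rw [← G.sum_inv_one_add_lapMatrix_row j]
  exact sum_congr rfl fun i _ ↦ hsymm.apply j i

end LinearOrderedField

end SimpleGraph

theorem inv_one_add_lapMatrix_doublyStochastic_general {n : ℕ}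
    (G : SimpleGraph (Fin n)) [DecidableRel G.Adj] :
    (∀ i j, 0 ≤ (1 + G.lapMatrix ℝ)⁻¹ i j) ∧
    (∀ i, ∑ j, (1 + G.lapMatrix ℝ)⁻¹ i j = 1) ∧
    (∀ j, ∑ i, (1 + G.lapMatrix ℝ)⁻¹ i j = 1) :=
  ⟨G.inv_one_add_lapMatrix_nonneg, G.sum_inv_one_add_lapMatrix_row,
    G.sum_inv_one_add_lapMatrix_col⟩

theorem inv_one_add_lapMatrix_doublyStochastic {n : ℕ} (hn : 1 ≤ n)
    (G : SimpleGraph (Fin n)) [DecidableRel G.Adj] :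
    (∀ i j, 0 ≤ (1 + G.lapMatrix ℝ)⁻¹ i j) ∧
    (∀ i, ∑ j, (1 + G.lapMatrix ℝ)⁻¹ i j = 1) ∧
    (∀ j, ∑ i, (1 + G.lapMatrix ℝ)⁻¹ i j = 1) :=
  inv_one_add_lapMatrix_doublyStochastic_general G
end

section
/- Let G be a simple graph on n ≥ 2 vertices with Laplacian L, let P = I − (n−1)^{−1}·L, and let K be geometrically distributed with success probability 1/n, i.e. Pr{K=k} = (1/n)(1−1/n)^k for k ≥ 0. Then the matrix series Σ_{k≥0} Pr{K=k}·P^k converges and equals (I + L)^{−1}. -/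
/-!
Every degree is at most `n - 1`, so `P = 1 - (n - 1)⁻¹ • L` is row stochastic and hence has
`ℓ^∞`-operator norm at most `1`. The geometric series `∑ (1/n) ((1 - 1/n) • P)^k` therefore
converges, to `(n • (1 - (1 - 1/n) • P))⁻¹`, and `n • (1 - (1 - 1/n) • P) = 1 + L`.
-/

open Matrix

attribute [local instance] Matrix.linftyOpNormedRing Matrix.linftyOpNormedAlgebra

namespace Matrix

variable {ι : Type*} [Fintype ι] [DecidableEq ι]

lemma linfty_opNorm_le_one_of_mem_rowStochastic {P : Matrix ι ι ℝ}
    (hP : P ∈ rowStochastic ℝ ι) : ‖P‖ ≤ 1 := by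
  rw [linfty_opNorm_def, NNReal.coe_le_one, Finset.sup_le_iff]
  intro i _
  rw [← NNReal.coe_le_coe, NNReal.coe_sum]
  simp_rw [coe_nnnorm, Real.norm_of_nonneg (nonneg_of_mem_rowStochastic hP),
    sum_row_of_mem_rowStochastic hP, NNReal.coe_one, le_refl]

theorem hasSum_geometric_smul_pow_of_mem_rowStochastic {P : Matrix ι ι ℝ}
    (hP : P ∈ rowStochastic ℝ ι) {p : ℝ} (hp₀ : 0 < p) (hp₂ : p < 2) :
    HasSum (fun k : ℕ => (p * (1 - p) ^ k) • P ^ k) (p⁻¹ • (1 - (1 - p) • P))⁻¹ := by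
  have hnorm : ‖(1 - p) • P‖ < 1 := by
    rw [norm_smul, Real.norm_eq_abs]
    calc |1 - p| * ‖P‖ ≤ |1 - p| * 1 :=
          mul_le_mul_of_nonneg_left (linfty_opNorm_le_one_of_mem_rowStochastic hP) (abs_nonneg _)
      _ < 1 := by rw [mul_one, abs_sub_lt_iff]; constructor <;> linarith
  have hdet : IsUnit (1 - (1 - p) • P).det :=
    (isUnit_iff_isUnit_det _).mp (isUnit_one_sub_of_norm_lt_one hnorm)
  have hinv := inv_smul' _ (Units.mk0 p⁻¹ (inv_ne_zero hp₀.ne')) hdet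
  simp only [Units.smul_def, Units.val_inv_eq_inv_val, Units.val_mk0, inv_inv] at hinv
  rw [hinv, nonsing_inv_eq_ringInverse]
  have hsum := (hasSum_geom_series_inverse _ hnorm).const_smul p
  simp only [smul_pow, smul_smul] at hsum
  exact hsum

end Matrix

namespace SimpleGraph

variable {V : Type*} [Fintype V] [DecidableEq V] (G : SimpleGraph V) [DecidableRel G.Adj]

lemma one_sub_smul_lapMatrix_mem_rowStochastic {t : ℝ} (ht₀ : 0 ≤ t)
    (ht : ∀ v, t * G.degree v ≤ 1) : 1 - t • G.lapMatrix ℝ ∈ rowStochastic ℝ V := by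
  refine mem_rowStochastic_iff_sum.mpr ⟨fun i j => ?_, fun i => ?_⟩
  · by_cases hij : i = j
    · subst hij
      simpa [lapMatrix, degMatrix] using ht i
    · by_cases hadj : G.Adj i j <;> simp [lapMatrix, degMatrix, hij, hadj, ht₀]
  · have hrow := congrFun (G.lapMatrix_mulVec_const_eq_zero (R := ℝ)) i
    simp only [mulVec, dotProduct, mul_one, Pi.zero_apply] at hrow
    simp [Finset.sum_sub_distrib, ← Finset.mul_sum, hrow, one_apply]

end SimpleGraph

theorem random_walk_geometric_eq_forest_matrix {n : ℕ} (hn : 2 ≤ n)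
    (G : SimpleGraph (Fin n)) [DecidableRel G.Adj] :
    HasSum
      (fun k : ℕ =>
        ((1 / (n : ℝ)) * (1 - 1 / (n : ℝ)) ^ k) •
          (1 - ((n : ℝ) - 1)⁻¹ • G.lapMatrix ℝ) ^ k)
      (1 + G.lapMatrix ℝ)⁻¹ := by
  have hn₂ : (2 : ℝ) ≤ n := by exact_mod_cast hn
  have hdeg (v : Fin n) : ((n : ℝ) - 1)⁻¹ * G.degree v ≤ 1 := by
    have : (G.degree v : ℝ) + 1 ≤ n := by
      exact_mod_cast (G.degree_lt_card_verts v).trans_eq (Fintype.card_fin n)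
    rw [inv_mul_le_one₀ (by linarith)]
    linarith
  have hP := G.one_sub_smul_lapMatrix_mem_rowStochastic (by simp; linarith) hdeg
  have hsum := hasSum_geometric_smul_pow_of_mem_rowStochastic hP (p := 1 / n)
    (by positivity) (by rw [div_lt_iff₀ (by positivity)]; linarith)
  convert hsum using 2
  have : (n : ℝ) - 1 ≠ 0 := by linarith
  rw [one_div, inv_inv]
  match_scalars
  · field_simp
    ring
  · field_simp
end
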